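/- Let Ω ⊆ 𝕆 be a circularly connected domain (𝕊(Ω,a,b) connected for all a ∈ ℝ, b > 0) and f : Ω → 𝕆 a slice function. Then f is a complete slice function: for any two imaginary units I₁, I₂ ∈ 𝕊, the I₁-slice stem function and the I₂-slice stem function of f coincide on Ω^{I₁} ∩ Ω^{I₂}. -/

import Mathlib

/-!
Because `𝕊(Ω,a,b)` is connected, the stem vector `(u,v)` at any non-real point `a + bI` of `Ω`
is characterised by `f(a + bK) = u + Kv` for all `K ∈ 𝕊(Ω,a,b)`, a condition independent of `I`.
So it suffices that such a pair is unique. Since `Ω` is open, `𝕊(Ω,a,b)` is an open subset of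
the sphere of imaginary units; if `K(v₁ - v₂) = u₂ - u₁` on it, moving `K` along a great circle
`cos t • K + sin t • ξ` with `ξ ⊥ K` shows `u₂ - u₁ = 0`, and then `v₁ = v₂` because the
multiplicative norm leaves `𝕆` without zero divisors.
-/

noncomputable section

/-- The octonions, realized as the Cayley–Dickson double of the quaternions. -/
@[ext] structure Octonion : Type where
  a : Quaternion ℝ
  b : Quaternion ℝ

notation "𝕆" => Octonion

namespace Octonion

instance : Zero 𝕆 := ⟨⟨0, 0⟩⟩
instance : One 𝕆 := ⟨⟨1, 0⟩⟩
instance : Add 𝕆 := ⟨fun x y => ⟨x.a + y.a, x.b + y.b⟩⟩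
instance : Neg 𝕆 := ⟨fun x => ⟨-x.a, -x.b⟩⟩
instance : Sub 𝕆 := ⟨fun x y => ⟨x.a - y.a, x.b - y.b⟩⟩
/-- Cayley–Dickson multiplication. -/
instance : Mul 𝕆 := ⟨fun x y => ⟨x.a * y.a - star y.b * x.b, y.b * x.a + x.b * star y.a⟩⟩
instance : SMul ℝ 𝕆 := ⟨fun r x => ⟨r • x.a, r • x.b⟩⟩
instance : SMul ℕ 𝕆 := ⟨fun n x => ⟨n • x.a, n • x.b⟩⟩
instance : SMul ℤ 𝕆 := ⟨fun n x => ⟨n • x.a, n • x.b⟩⟩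

def toProd (x : 𝕆) : Quaternion ℝ × Quaternion ℝ := (x.a, x.b)

lemma toProd_injective : Function.Injective toProd := by
  intro x y h
  cases x; cases y
  simpa [toProd, Prod.ext_iff, Octonion.mk.injEq] using h

instance : AddCommGroup 𝕆 :=
  Function.Injective.addCommGroup toProd toProd_injective rfl (fun _ _ => rfl) (fun _ => rfl)
    (fun _ _ => rfl) (fun _ _ => rfl) (fun _ _ => rfl)

def toProdHom : 𝕆 →+ Quaternion ℝ × Quaternion ℝ :=
  { toFun := toProd, map_zero' := rfl, map_add' := fun _ _ => rfl }

instance : Module ℝ 𝕆 :=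
  Function.Injective.module ℝ toProdHom toProd_injective (fun _ _ => rfl)

def toProdLin : 𝕆 →ₗ[ℝ] Quaternion ℝ × Quaternion ℝ :=
  { toFun := toProd, map_add' := fun _ _ => rfl, map_smul' := fun _ _ => rfl }

instance : NormedAddCommGroup 𝕆 := NormedAddCommGroup.induced 𝕆 _ toProdHom toProd_injective
instance : NormedSpace ℝ 𝕆 := NormedSpace.induced ℝ 𝕆 _ toProdLin

/-- Octonionic conjugation. -/
def conj (x : 𝕆) : 𝕆 := ⟨star x.a, -x.b⟩

/-- The real part of an octonion. -/
def re (x : 𝕆) : ℝ := x.a.re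

/-- The imaginary part of an octonion. -/
def im (x : 𝕆) : 𝕆 := ⟨x.a.im, x.b⟩

/-- The squared (Euclidean) norm of an octonion. -/
def normSq (x : 𝕆) : ℝ := Quaternion.normSq x.a + Quaternion.normSq x.b

/-- The (Euclidean) norm of an octonion. -/
def onorm (x : 𝕆) : ℝ := Real.sqrt (normSq x)

instance : Inv 𝕆 := ⟨fun x => (normSq x)⁻¹ • conj x⟩

/-- The sphere of imaginary units of `𝕆`. -/
def sph : Set 𝕆 := {I | onorm I = 1 ∧ re I = 0}

/-- `tau I (α + β i) = α + β I`. -/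
def tau (I : 𝕆) (z : ℂ) : 𝕆 := z.re • (1 : 𝕆) + z.im • I

end Octonion

namespace Octonion

/-- `𝕊(Ω,a,b)`: the set of imaginary units `I` with `a + bI ∈ Ω`. -/
def sSet (Ω : Set 𝕆) (a b : ℝ) : Set 𝕆 := {I | I ∈ sph ∧ a • (1 : 𝕆) + b • I ∈ Ω}

/-- `Ω` is circularly connected if every `𝕊(Ω,a,b)` is connected. -/
def CircularlyConnected (Ω : Set 𝕆) : Prop :=
  ∀ a b : ℝ, 0 < b → IsPreconnected (sSet Ω a b)

/-- `f` is a (left) slice function on `Ω`: for every connected component of each nonempty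
`𝕊(Ω,a,b)` there is a pair `(u,v)` with `f (a + bI) = u + Iv` on that component. -/
def IsSliceFunction (Ω : Set 𝕆) (f : 𝕆 → 𝕆) : Prop :=
  ∀ (a b : ℝ), 0 < b → ∀ I ∈ sSet Ω a b, ∃ u v : 𝕆,
    ∀ J ∈ connectedComponentIn (sSet Ω a b) I, f (a • (1 : 𝕆) + b • J) = u + J * v

open Classical

/-- `(u,v)` is the stem vector of the slice function `f` at `x ∈ Ω`: for real `x` it is
`(f x, 0)`; otherwise, writing `x = a + bI` with `b = |Im x| > 0` and `I` an imaginary unit,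
it is the solution of `f (a + bJ) = u + Jv` on the connected component of `𝕊(Ω,a,b)`
containing `I`. -/
def IsStemVector (Ω : Set 𝕆) (f : 𝕆 → 𝕆) (x : 𝕆) (u v : 𝕆) : Prop :=
  if im x = 0 then u = f x ∧ v = 0
  else ∀ K ∈ connectedComponentIn (sSet Ω (re x) (onorm (im x))) ((onorm (im x))⁻¹ • im x),
    f (re x • (1 : 𝕆) + onorm (im x) • K) = u + K * v

end Octonion

open Filter Topology

theorem eq_zero_of_eventually_cos_smul_add_sin_smul_eq {E : Type*} [AddCommGroup E] [Module ℝ E]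
    {c d : E} (h : ∀ᶠ t in 𝓝 (0 : ℝ), Real.cos t • c + Real.sin t • d = c) : c = 0 ∧ d = 0 := by
  have h_neg : ∀ᶠ t in 𝓝 (0 : ℝ), Real.cos (-t) • c + Real.sin (-t) • d = c :=
    (continuous_neg.tendsto' 0 0 neg_zero).eventually h
  obtain ⟨t, ⟨hpos, hneg⟩, ht₀, htπ⟩ :=
    (((h.and h_neg).filter_mono nhdsWithin_le_nhds).and (Ioo_mem_nhdsGT Real.pi_pos)).exists
  rw [Real.cos_neg, Real.sin_neg, neg_smul, ← sub_eq_add_neg] at hneg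
  have hsin : Real.sin t ≠ 0 := (Real.sin_pos_of_pos_of_lt_pi ht₀ htπ).ne'
  have hcos : Real.cos t - 1 ≠ 0 := by
    intro hcos
    have := Real.sin_sq_add_cos_sq t
    rw [sub_eq_zero.mp hcos] at this
    exact hsin (by simpa using this)
  have hd : d = 0 := by
    refine (smul_eq_zero.mp ?_).resolve_left (mul_ne_zero two_ne_zero hsin)
    calc (2 * Real.sin t) • d
        = (Real.cos t • c + Real.sin t • d) - (Real.cos t • c - Real.sin t • d) := by module
      _ = 0 := by rw [hpos, hneg, sub_self]
  rw [hd, smul_zero, add_zero] at hpos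
  refine ⟨(smul_eq_zero.mp ?_).resolve_left hcos, hd⟩
  calc (Real.cos t - 1) • c = Real.cos t • c - c := by module
    _ = 0 := by rw [hpos, sub_self]

namespace Octonion

@[simp] theorem add_a (x y : 𝕆) : (x + y).a = x.a + y.a := rfl
@[simp] theorem add_b (x y : 𝕆) : (x + y).b = x.b + y.b := rfl
@[simp] theorem sub_a (x y : 𝕆) : (x - y).a = x.a - y.a := rfl
@[simp] theorem sub_b (x y : 𝕆) : (x - y).b = x.b - y.b := rfl
@[simp] theorem smul_a (r : ℝ) (x : 𝕆) : (r • x).a = r • x.a := rfl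
@[simp] theorem smul_b (r : ℝ) (x : 𝕆) : (r • x).b = r • x.b := rfl
@[simp] theorem one_b : (1 : 𝕆).b = 0 := rfl
theorem mul_a (x y : 𝕆) : (x * y).a = x.a * y.a - star y.b * x.b := rfl
theorem mul_b (x y : 𝕆) : (x * y).b = y.b * x.a + x.b * star y.a := rfl

protected theorem add_mul (x y z : 𝕆) : (x + y) * z = x * z + y * z := by
  ext : 1 <;> simp only [mul_a, mul_b, add_a, add_b, add_mul, mul_add] <;> abel

protected theorem smul_mul_assoc (r : ℝ) (x y : 𝕆) : (r • x) * y = r • (x * y) := by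
  ext : 1 <;>
    simp only [mul_a, mul_b, smul_a, smul_b, smul_mul_assoc, mul_smul_comm, smul_sub, smul_add]

protected theorem mul_sub (x y z : 𝕆) : x * (y - z) = x * y - x * z := by
  ext : 1 <;> simp only [mul_a, mul_b, sub_a, sub_b, mul_sub, sub_mul, star_sub] <;> abel

theorem re_add (x y : 𝕆) : re (x + y) = re x + re y := Quaternion.re_add _ _
theorem re_sub (x y : 𝕆) : re (x - y) = re x - re y := Quaternion.re_sub _ _
theorem re_smul (r : ℝ) (x : 𝕆) : re (r • x) = r * re x := Quaternion.re_smul _ _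
@[simp] theorem re_one : re 1 = 1 := rfl

theorem re_smul_one_add_im (x : 𝕆) : re x • (1 : 𝕆) + im x = x := by
  ext : 1
  · change x.a.re • (1 : Quaternion ℝ) + x.a.im = x.a
    rw [← Algebra.algebraMap_eq_smul_one, Quaternion.algebraMap_def, Quaternion.re_add_im]
  · simp [im]

theorem re_im (x : 𝕆) : re (im x) = 0 := Quaternion.re_im _

theorem normSq_mul (x y : 𝕆) : normSq (x * y) = normSq x * normSq y := by
  simp only [normSq, mul_a, mul_b, Quaternion.normSq_def', Quaternion.re_mul,
    Quaternion.imI_mul, Quaternion.imJ_mul, Quaternion.imK_mul, Quaternion.re_sub,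
    Quaternion.imI_sub, Quaternion.imJ_sub, Quaternion.imK_sub, Quaternion.re_add,
    Quaternion.imI_add, Quaternion.imJ_add, Quaternion.imK_add, Quaternion.re_star,
    Quaternion.imI_star, Quaternion.imJ_star, Quaternion.imK_star]
  ring

theorem normSq_nonneg (x : 𝕆) : 0 ≤ normSq x :=
  add_nonneg Quaternion.normSq_nonneg Quaternion.normSq_nonneg

theorem normSq_eq_zero {x : 𝕆} : normSq x = 0 ↔ x = 0 := by
  rw [normSq, add_eq_zero_iff_of_nonneg Quaternion.normSq_nonneg Quaternion.normSq_nonneg,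
    Quaternion.normSq_eq_zero, Quaternion.normSq_eq_zero, Octonion.ext_iff]
  rfl

instance : NoZeroDivisors 𝕆 where
  eq_zero_or_eq_zero_of_mul_eq_zero {x y} h := by
    have h' := congrArg normSq h
    rw [normSq_mul, normSq_eq_zero.mpr rfl, mul_eq_zero] at h'
    simpa only [normSq_eq_zero] using h'

def dot (x y : 𝕆) : ℝ :=
  x.a.re * y.a.re + x.a.imI * y.a.imI + x.a.imJ * y.a.imJ + x.a.imK * y.a.imK +
    x.b.re * y.b.re + x.b.imI * y.b.imI + x.b.imJ * y.b.imJ + x.b.imK * y.b.imK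

theorem dot_self (x : 𝕆) : dot x x = normSq x := by
  simp only [dot, normSq, Quaternion.normSq_def']
  ring

theorem dot_smul_left (r : ℝ) (x y : 𝕆) : dot (r • x) y = r * dot x y := by
  simp only [dot, smul_a, smul_b, Quaternion.re_smul, Quaternion.imI_smul, Quaternion.imJ_smul,
    Quaternion.imK_smul, smul_eq_mul]
  ring

theorem dot_smul_right (r : ℝ) (x y : 𝕆) : dot x (r • y) = r * dot x y := by
  simp only [dot, smul_a, smul_b, Quaternion.re_smul, Quaternion.imI_smul, Quaternion.imJ_smul,
    Quaternion.imK_smul, smul_eq_mul]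
  ring

theorem dot_sub_right (x y z : 𝕆) : dot x (y - z) = dot x y - dot x z := by
  simp only [dot, sub_a, sub_b, Quaternion.re_sub, Quaternion.imI_sub, Quaternion.imJ_sub,
    Quaternion.imK_sub]
  ring

theorem normSq_smul_add_smul (α β : ℝ) (x y : 𝕆) :
    normSq (α • x + β • y) = α ^ 2 * normSq x + 2 * α * β * dot x y + β ^ 2 * normSq y := by
  simp only [normSq, dot, Quaternion.normSq_def', add_a, add_b, smul_a, smul_b,
    Quaternion.re_add, Quaternion.imI_add, Quaternion.imJ_add, Quaternion.imK_add,
    Quaternion.re_smul, Quaternion.imI_smul, Quaternion.imJ_smul, Quaternion.imK_smul, smul_eq_mul]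
  ring

theorem normSq_smul (r : ℝ) (x : 𝕆) : normSq (r • x) = r ^ 2 * normSq x := by
  simpa using normSq_smul_add_smul r 0 x 0

theorem onorm_smul (r : ℝ) (x : 𝕆) : onorm (r • x) = |r| * onorm x := by
  rw [onorm, onorm, normSq_smul, Real.sqrt_mul (sq_nonneg r), Real.sqrt_sq_eq_abs]

theorem onorm_pos {x : 𝕆} (hx : x ≠ 0) : 0 < onorm x :=
  Real.sqrt_pos.mpr <| (normSq_nonneg x).lt_of_ne' (mt normSq_eq_zero.mp hx)

theorem mem_sph_iff {I : 𝕆} : I ∈ sph ↔ normSq I = 1 ∧ re I = 0 := by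
  rw [sph, Set.mem_ofPred_eq, onorm, Real.sqrt_eq_one]

theorem ne_zero_of_mem_sph {I : 𝕆} (hI : I ∈ sph) : I ≠ 0 := by
  rintro rfl
  simp [mem_sph_iff, normSq_eq_zero.mpr rfl] at hI

theorem inv_onorm_smul_mem_sph {x : 𝕆} (hre : re x = 0) (hx : x ≠ 0) : (onorm x)⁻¹ • x ∈ sph :=
  ⟨by rw [onorm_smul, abs_inv, abs_of_pos (onorm_pos hx), inv_mul_cancel₀ (onorm_pos hx).ne'],
    by rw [re_smul, hre, mul_zero]⟩

def e1 : 𝕆 := ⟨0, 1⟩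
def e2 : 𝕆 := ⟨0, ⟨0, 1, 0, 0⟩⟩

theorem e1_mem_sph : e1 ∈ sph := by
  simp [mem_sph_iff, e1, normSq, re, Quaternion.re_zero]

theorem e2_mem_sph : e2 ∈ sph := by
  simp [mem_sph_iff, e2, normSq, re, Quaternion.re_zero,
    Quaternion.normSq_def' (⟨0, 1, 0, 0⟩ : Quaternion ℝ)]

theorem dot_e1_e2 : dot e1 e2 = 0 := by
  simp [dot, e1, e2, Quaternion.re_zero, Quaternion.imI_zero, Quaternion.imJ_zero,
    Quaternion.imK_zero, Quaternion.imI_one]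

/-- Gram–Schmidt applied to `e1`, or to `e2` when `K = ±e1`. -/
theorem exists_mem_sph_dot_eq_zero {K : 𝕆} (hK : K ∈ sph) : ∃ ξ ∈ sph, dot K ξ = 0 := by
  rw [mem_sph_iff] at hK
  set p := e1 - dot K e1 • K
  by_cases hp : p = 0
  · refine ⟨e2, e2_mem_sph, ?_⟩
    have he1 : dot K e1 • K = e1 := (sub_eq_zero.mp hp).symm
    have hβ : dot K e1 ≠ 0 := by
      intro h0
      rw [h0, zero_smul] at he1
      exact ne_zero_of_mem_sph e1_mem_sph he1.symm
    have := dot_e1_e2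
    rw [← he1, dot_smul_left] at this
    exact (mul_eq_zero.mp this).resolve_left hβ
  · refine ⟨(onorm p)⁻¹ • p, inv_onorm_smul_mem_sph ?_ hp, ?_⟩
    · rw [re_sub, re_smul, hK.2, (mem_sph_iff.mp e1_mem_sph).2, mul_zero, sub_zero]
    · rw [dot_smul_right, dot_sub_right, dot_smul_right, dot_self, hK.1]
      ring

theorem cos_smul_add_sin_smul_mem_sph {K ξ : 𝕆} (hK : K ∈ sph) (hξ : ξ ∈ sph) (h : dot K ξ = 0)
    (t : ℝ) : Real.cos t • K + Real.sin t • ξ ∈ sph := by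
  rw [mem_sph_iff] at hK hξ ⊢
  constructor
  · rw [normSq_smul_add_smul, hK.1, hξ.1, h]
    linear_combination Real.cos_sq_add_sin_sq t
  · rw [re_add, re_smul, re_smul, hK.2, hξ.2]
    ring

theorem eventually_cos_smul_add_sin_smul_mem_sSet {Ω : Set 𝕆} (hΩ : IsOpen Ω) {a b : ℝ}
    {K ξ : 𝕆} (hK : K ∈ sSet Ω a b) (hξ : ξ ∈ sph) (h : dot K ξ = 0) :
    ∀ᶠ t in 𝓝 (0 : ℝ), Real.cos t • K + Real.sin t • ξ ∈ sSet Ω a b := by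
  have hγ : Continuous fun t : ℝ => a • (1 : 𝕆) + b • (Real.cos t • K + Real.sin t • ξ) := by
    fun_prop
  have hγ₀ : a • (1 : 𝕆) + b • (Real.cos 0 • K + Real.sin 0 • ξ) ∈ Ω := by
    simpa using hK.2
  exact ((hγ.tendsto 0).eventually (hΩ.mem_nhds hγ₀)).mono fun t ht =>
    ⟨cos_smul_add_sin_smul_mem_sph hK.1 hξ h t, ht⟩

theorem eq_zero_of_forall_mem_sSet_mul_eq {Ω : Set 𝕆} (hΩ : IsOpen Ω) {a b : ℝ} {K₀ w c : 𝕆}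
    (hK₀ : K₀ ∈ sSet Ω a b) (h : ∀ K ∈ sSet Ω a b, K * w = c) : w = 0 ∧ c = 0 := by
  obtain ⟨ξ, hξ, hdot⟩ := exists_mem_sph_dot_eq_zero hK₀.1
  have hcurve : ∀ᶠ t in 𝓝 (0 : ℝ), Real.cos t • c + Real.sin t • (ξ * w) = c :=
    (eventually_cos_smul_add_sin_smul_mem_sSet hΩ hK₀ hξ hdot).mono fun t ht => by
      simpa only [Octonion.add_mul, Octonion.smul_mul_assoc, h K₀ hK₀] using h _ ht
  obtain ⟨hc, -⟩ := eq_zero_of_eventually_cos_smul_add_sin_smul_eq hcurve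
  exact ⟨(eq_zero_or_eq_zero_of_mul_eq_zero ((h K₀ hK₀).trans hc)).resolve_left
    (ne_zero_of_mem_sph hK₀.1), hc⟩

theorem eq_of_forall_mem_sSet_add_mul_eq {Ω : Set 𝕆} (hΩ : IsOpen Ω) {a b : ℝ}
    {K₀ u₁ v₁ u₂ v₂ : 𝕆} (hK₀ : K₀ ∈ sSet Ω a b) (h : ∀ K ∈ sSet Ω a b, u₁ + K * v₁ = u₂ + K * v₂) :
    u₁ = u₂ ∧ v₁ = v₂ := by
  have hdiff : ∀ K ∈ sSet Ω a b, K * (v₁ - v₂) = u₂ - u₁ := fun K hK => by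
    rw [Octonion.mul_sub, sub_eq_sub_iff_add_eq_add, add_comm]
    exact h K hK
  obtain ⟨hv, hu⟩ := eq_zero_of_forall_mem_sSet_mul_eq hΩ hK₀ hdiff
  exact ⟨(sub_eq_zero.mp hu).symm, sub_eq_zero.mp hv⟩

theorem re_tau {I : 𝕆} (hI : re I = 0) (z : ℂ) : re (tau I z) = z.re := by
  rw [tau, re_add, re_smul, re_smul, re_one, hI]
  ring

theorem im_tau {I : 𝕆} (hI : re I = 0) (z : ℂ) : im (tau I z) = z.im • I := by
  rw [eq_sub_of_add_eq' (re_smul_one_add_im _), re_tau hI, tau]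
  abel

theorem onorm_im_tau {I : 𝕆} (hI : I ∈ sph) (z : ℂ) : onorm (im (tau I z)) = |z.im| := by
  rw [im_tau hI.2, onorm_smul, hI.1, mul_one]

theorem im_tau_ne_zero {I : 𝕆} (hI : I ∈ sph) {z : ℂ} (hz : z.im ≠ 0) : im (tau I z) ≠ 0 := by
  rw [im_tau hI.2]
  exact smul_ne_zero hz (ne_zero_of_mem_sph hI)

theorem inv_onorm_im_smul_mem_sSet {Ω : Set 𝕆} {x : 𝕆} (hx : x ∈ Ω) (him : im x ≠ 0) :
    (onorm (im x))⁻¹ • im x ∈ sSet Ω (re x) (onorm (im x)) :=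
  ⟨inv_onorm_smul_mem_sph (re_im x) him, by
    rwa [smul_smul, mul_inv_cancel₀ (onorm_pos him).ne', one_smul, re_smul_one_add_im]⟩

theorem sSet_nonempty_of_tau_mem {Ω : Set 𝕆} {I : 𝕆} (hI : I ∈ sph) {z : ℂ} (hz : z.im ≠ 0)
    (hτ : tau I z ∈ Ω) : (sSet Ω z.re |z.im|).Nonempty := by
  have hK := inv_onorm_im_smul_mem_sSet hτ (im_tau_ne_zero hI hz)
  rw [re_tau hI.2, onorm_im_tau hI] at hK
  exact ⟨_, hK⟩

theorem IsStemVector.eq_of_im_eq_zero {Ω : Set 𝕆} {f : 𝕆 → 𝕆} {x u v : 𝕆}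
    (h : IsStemVector Ω f x u v) (hx : im x = 0) : u = f x ∧ v = 0 := by
  rwa [IsStemVector, if_pos hx] at h

theorem IsStemVector.forall_mem_sSet {Ω : Set 𝕆} {f : 𝕆 → 𝕆} {x u v : 𝕆}
    (h : IsStemVector Ω f x u v) (hx : x ∈ Ω) (him : im x ≠ 0)
    (hconn : IsPreconnected (sSet Ω (re x) (onorm (im x)))) :
    ∀ K ∈ sSet Ω (re x) (onorm (im x)), f (re x • (1 : 𝕆) + onorm (im x) • K) = u + K * v := by
  rwa [IsStemVector, if_neg him, hconn.connectedComponentIn (inv_onorm_im_smul_mem_sSet hx him)]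
    at h

theorem IsStemVector.forall_mem_sSet_of_tau {Ω : Set 𝕆} (hcc : CircularlyConnected Ω)
    {f : 𝕆 → 𝕆} {I u v : 𝕆} (hI : I ∈ sph) {z : ℂ} (hz : z.im ≠ 0) (hτ : tau I z ∈ Ω)
    (h : IsStemVector Ω f (tau I z) u v) :
    ∀ K ∈ sSet Ω z.re |z.im|, f (z.re • (1 : 𝕆) + |z.im| • K) = u + K * v := by
  have := h.forall_mem_sSet hτ (im_tau_ne_zero hI hz)
  rw [re_tau hI.2, onorm_im_tau hI] at this
  exact this (hcc _ _ (abs_pos.mpr hz))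

end Octonion

open Octonion in
theorem stmt13_general (Ω : Set 𝕆) (hΩo : IsOpen Ω)
    (hcc : CircularlyConnected Ω) (f : 𝕆 → 𝕆)
    (I₁ I₂ : 𝕆) (hI₁ : I₁ ∈ sph) (hI₂ : I₂ ∈ sph) (z : ℂ)
    (h₁ : tau I₁ z ∈ Ω) (h₂ : tau I₂ z ∈ Ω) (u₁ v₁ u₂ v₂ : 𝕆)
    (hs₁ : IsStemVector Ω f (tau I₁ z) u₁ v₁) (hs₂ : IsStemVector Ω f (tau I₂ z) u₂ v₂) :
    u₁ = u₂ ∧ v₁ = v₂ := by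
  by_cases hz : z.im = 0
  · have htau : ∀ I, tau I z = z.re • (1 : 𝕆) := fun I => by rw [tau, hz, zero_smul, add_zero]
    obtain ⟨rfl, rfl⟩ := hs₁.eq_of_im_eq_zero (by rw [im_tau hI₁.2, hz, zero_smul])
    obtain ⟨rfl, rfl⟩ := hs₂.eq_of_im_eq_zero (by rw [im_tau hI₂.2, hz, zero_smul])
    exact ⟨by rw [htau, htau], rfl⟩
  · obtain ⟨K₀, hK₀⟩ := sSet_nonempty_of_tau_mem hI₁ hz h₁
    exact eq_of_forall_mem_sSet_add_mul_eq hΩo hK₀ fun K hK =>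
      (hs₁.forall_mem_sSet_of_tau hcc hI₁ hz h₁ K hK).symm.trans
        (hs₂.forall_mem_sSet_of_tau hcc hI₂ hz h₂ K hK)

open Octonion in
/-- every slice function on a circularly connected domain is a complete slice
function: for any imaginary units `I₁, I₂` the corresponding slice stem functions agree on
`Ω^{I₁} ∩ Ω^{I₂}`, i.e. the stem vectors of `f` at `τ_{I₁} z` and `τ_{I₂} z` coincide. -/
theorem stmt13 (Ω : Set 𝕆) (hΩo : IsOpen Ω) (hΩc : IsConnected Ω)
    (hcc : CircularlyConnected Ω) (f : 𝕆 → 𝕆) (hf : IsSliceFunction Ω f)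
    (I₁ I₂ : 𝕆) (hI₁ : I₁ ∈ sph) (hI₂ : I₂ ∈ sph) (z : ℂ)
    (h₁ : tau I₁ z ∈ Ω) (h₂ : tau I₂ z ∈ Ω) (u₁ v₁ u₂ v₂ : 𝕆)
    (hs₁ : IsStemVector Ω f (tau I₁ z) u₁ v₁) (hs₂ : IsStemVector Ω f (tau I₂ z) u₂ v₂) :
    u₁ = u₂ ∧ v₁ = v₂ :=
  stmt13_general Ω hΩo hcc f I₁ I₂ hI₁ hI₂ z h₁ h₂ u₁ v₁ u₂ v₂ hs₁ hs₂
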